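/- For positive integers n, m with n ≥ 2, the number of lattice points (x_1,...,x_n) ∈ Z^n with x_1 = −ℓ (for fixed 1 ≤ ℓ ≤ n), x_i > −ℓ for 2 ≤ i ≤ j, x_i ≥ 0 for j+1 ≤ i ≤ n, and weight k/m with respect to the Kloosterman polytope Δ(K^j_{n,m}), equals C(k − mℓ + n − j − 1, n − 2) (taken to be 0 when the upper argument is negative). -/

import Mathlib

open Pointwise

/-- Integer binomial coefficient, zero for negative upper argument. -/
def ch (a : ℤ) (b : ℕ) : ℤ := if a < 0 then 0 else ((a.toNat).choose b : ℤ)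

/-- The weight of a lattice point with respect to a polytope given as the convex
hull of a vertex set `V`: the least `c ≥ 0` with `x ∈ c·Δ`. -/
noncomputable def polyWeight {n : ℕ} (V : Set (Fin n → ℝ)) (x : Fin n → ℤ) : ℝ :=
  sInf {c : ℝ | 0 ≤ c ∧ (fun i => (x i : ℝ)) ∈ c • convexHull ℝ V}

/-- The vertices of the Kloosterman polytope `Δ(K^j_{n,m})`:
`−(e₁+⋯+e_j)` and `m·e_i` for `1 ≤ i ≤ n`. -/
def klVerts (n j m : ℕ) : Set (Fin n → ℝ) :=
  insert (fun i : Fin n => if (i : ℕ) < j then (-1 : ℝ) else 0)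
    (Set.range fun ℓ : Fin n => fun i => if i = ℓ then (m : ℝ) else 0)

/-!
The facet of `Δ(K^j_{n,m})` through `-(e₁ + ⋯ + e_j)` and the `m eᵢ` lies on the hyperplane
`F = 1`, where `F y = (∑ yᵢ - (m + j) y₁) / m`, and `F ≤ 1` on the whole polytope. A point of the
stratum is a nonnegative combination of these vertices, so its weight is `F x`, and the weight
condition becomes `∑ xᵢ = k - (m + j) ℓ`. With `x₁ = -ℓ` fixed and the other coordinates shifted
to be nonnegative, this counts weak compositions of `k - m ℓ - j + 1` into `n - 1` parts.
-/

open Finset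

lemma Fin.sum_ite_val_lt {M : Type*} [AddCommMonoid M] {n j : ℕ} (hjn : j ≤ n) (c : M) :
    ∑ i : Fin n, (if (i : ℕ) < j then c else 0) = j • c := by
  have : (range n).filter (· < j) = range j := by
    ext t
    simp only [mem_filter, mem_range]
    omega
  rw [Fin.sum_univ_eq_sum_range (fun t => if t < j then c else 0) n, ← sum_filter, this,
    Finset.sum_const, card_range]

lemma sum_smul_mem_smul_convexHull {𝕜 E ι : Type*} [Field 𝕜] [LinearOrder 𝕜]
    [IsStrictOrderedRing 𝕜] [AddCommGroup E] [Module 𝕜 E] {V : Set E} (s : Finset ι)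
    {w : ι → 𝕜} {z : ι → E} (hw : ∀ i ∈ s, 0 ≤ w i) (hpos : 0 < ∑ i ∈ s, w i)
    (hz : ∀ i ∈ s, z i ∈ V) :
    ∑ i ∈ s, w i • z i ∈ (∑ i ∈ s, w i) • convexHull 𝕜 V := by
  rw [Set.mem_smul_set_iff_inv_smul_mem₀ hpos.ne']
  exact s.centerMass_mem_convexHull hw hpos hz

lemma polyWeight_eq_of_mem_smul_convexHull {n : ℕ} {V : Set (Fin n → ℝ)} {x : Fin n → ℤ}
    (F : (Fin n → ℝ) →ₗ[ℝ] ℝ) (hF : ∀ v ∈ V, F v ≤ 1) {c : ℝ} (hc : 0 ≤ c)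
    (hxc : (fun i => (x i : ℝ)) ∈ c • convexHull ℝ V) (hFx : F (fun i => (x i : ℝ)) = c) :
    polyWeight V x = c := by
  have hhull : convexHull ℝ V ⊆ {y | F y ≤ 1} :=
    convexHull_min hF (convex_halfSpace_le F.isLinear 1)
  refine le_antisymm (csInf_le ⟨0, fun _ h => h.1⟩ ⟨hc, hxc⟩) (le_csInf ⟨c, hc, hxc⟩ ?_)
  rintro c' ⟨hc', p, hp, hpx⟩
  calc c = c' * F p := by rw [← hFx, ← hpx, F.map_smul, smul_eq_mul]
    _ ≤ c' * 1 := mul_le_mul_of_nonneg_left (hhull hp) hc'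
    _ = c' := mul_one c'

noncomputable def klFacet {n : ℕ} (h0 : 0 < n) (j m : ℕ) : (Fin n → ℝ) →ₗ[ℝ] ℝ where
  toFun y := (∑ i, y i - (m + j) * y ⟨0, h0⟩) / m
  map_add' y z := by
    simp only [Pi.add_apply, Finset.sum_add_distrib]
    ring
  map_smul' c y := by
    simp only [Pi.smul_apply, smul_eq_mul, ← Finset.mul_sum, RingHom.id_apply]
    ring

lemma klFacet_apply {n : ℕ} (h0 : 0 < n) (j m : ℕ) (y : Fin n → ℝ) :
    klFacet h0 j m y = (∑ i, y i - (m + j) * y ⟨0, h0⟩) / m := rfl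

lemma klFacet_le_one {n j m : ℕ} (h0 : 0 < n) (hm : 0 < m) (hj : 0 < j) (hjn : j ≤ n) :
    ∀ v ∈ klVerts n j m, klFacet h0 j m v ≤ 1 := by
  have hm' : (0 : ℝ) < m := Nat.cast_pos.2 hm
  rintro v (rfl | ⟨t, rfl⟩)
  · rw [klFacet_apply, Fin.sum_ite_val_lt hjn, if_pos hj, nsmul_eq_mul, div_le_one hm']
    linarith
  · rw [klFacet_apply]
    dsimp only
    rw [Finset.sum_ite_eq' univ t, if_pos (mem_univ t), div_le_one hm']
    split_ifs <;> nlinarith [(Nat.cast_nonneg j : (0 : ℝ) ≤ j)]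

theorem polyWeight_klVerts {n j m : ℕ} (h0 : 0 < n) (hm : 0 < m) (hj : 0 < j) (hjn : j ≤ n)
    {x : Fin n → ℤ} (hx0 : x ⟨0, h0⟩ < 0)
    (hlt : ∀ i : Fin n, (i : ℕ) < j → x ⟨0, h0⟩ ≤ x i)
    (hge : ∀ i : Fin n, j ≤ (i : ℕ) → 0 ≤ x i) :
    polyWeight (klVerts n j m) x = (∑ i, (x i : ℝ) - (m + j) * x ⟨0, h0⟩) / m := by
  have hm' : (0 : ℝ) < m := Nat.cast_pos.2 hm
  set a : ℝ := -x ⟨0, h0⟩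
  set b : Fin n → ℝ := fun i => (x i + if (i : ℕ) < j then a else 0) / m
  let w : Option (Fin n) → ℝ := fun o => o.elim a b
  let z : Option (Fin n) → Fin n → ℝ := fun o =>
    o.elim (fun i => if (i : ℕ) < j then -1 else 0) fun t i => if i = t then (m : ℝ) else 0
  have ha : 0 < a := by simpa [a] using hx0
  have hb : ∀ i, 0 ≤ b i := fun i => by
    refine div_nonneg ?_ hm'.le
    split_ifs with hij
    · have : (x ⟨0, h0⟩ : ℝ) ≤ x i := Int.cast_le.2 (hlt i hij)
      linarith
    · have : (0 : ℝ) ≤ x i := Int.cast_nonneg (hge i (not_lt.1 hij))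
      linarith
  have hdecomp : (fun i => (x i : ℝ)) = ∑ o, w o • z o := by
    funext i
    simp only [w, z, b, Fintype.sum_option, Option.elim, Finset.sum_apply,
      Pi.smul_apply, smul_eq_mul, mul_ite, mul_zero, Finset.sum_ite_eq, mem_univ, if_true]
    split_ifs <;> field_simp <;> ring
  have hsum : ∑ o, w o = (∑ i, (x i : ℝ) - (m + j) * x ⟨0, h0⟩) / m := by
    simp only [w, b, Fintype.sum_option, Option.elim, ← Finset.sum_div, Finset.sum_add_distrib,
      Fin.sum_ite_val_lt hjn, nsmul_eq_mul, a]
    field_simp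
    ring
  refine polyWeight_eq_of_mem_smul_convexHull (klFacet h0 j m) (klFacet_le_one h0 hm hj hjn)
    (hsum ▸ Finset.sum_nonneg fun o _ => ?_) ?_ (klFacet_apply h0 j m _)
  · cases o
    exacts [ha.le, hb _]
  · have hpos : 0 < ∑ o, w o := by
      rw [Fintype.sum_option]
      exact add_pos_of_pos_of_nonneg ha (Finset.sum_nonneg fun i _ => hb i)
    have := sum_smul_mem_smul_convexHull univ (fun o _ => ?_) hpos
      (fun o _ => show z o ∈ klVerts n j m from ?_)
    · rwa [← hdecomp, hsum] at this
    · cases o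
      exacts [ha.le, hb _]
    · cases o
      exacts [Set.mem_insert _ _, Set.mem_insert_of_mem _ ⟨_, rfl⟩]

lemma polyWeight_klVerts_eq_div_iff {n j m ℓ k : ℕ} (h0 : 0 < n) (hm : 0 < m) (hj : 0 < j)
    (hjn : j ≤ n) (hℓ : 1 ≤ ℓ) {x : Fin n → ℤ} (hx0 : x ⟨0, h0⟩ = -(ℓ : ℤ))
    (hlt : ∀ i : Fin n, 1 ≤ (i : ℕ) → (i : ℕ) < j → -(ℓ : ℤ) < x i)
    (hge : ∀ i : Fin n, j ≤ (i : ℕ) → 0 ≤ x i) :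
    polyWeight (klVerts n j m) x = k / m ↔ ∑ i, x i = k - (m + j) * ℓ := by
  have hle (i : Fin n) (hij : (i : ℕ) < j) : x ⟨0, h0⟩ ≤ x i := by
    rcases Nat.eq_zero_or_pos i with h | h
    · rw [show i = ⟨0, h0⟩ from Fin.ext h]
    · exact hx0 ▸ (hlt i h hij).le
  rw [polyWeight_klVerts h0 hm hj hjn (by omega) hle hge,
    div_left_inj' (Nat.cast_ne_zero.2 hm.ne'), hx0, ← Int.cast_sum]
  constructor <;> intro h
  · have : ((∑ i, x i : ℤ) : ℝ) = ((k - (m + j) * ℓ : ℤ) : ℝ) := by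
      push_cast at h ⊢
      linarith
    exact_mod_cast this
  · rw [h]
    push_cast
    ring

lemma ncard_nat_tuples_sum_eq (ι : Type*) [Fintype ι] (S : ℕ) :
    {z : ι → ℕ | ∑ i, z i = S}.ncard = (Fintype.card ι + S - 1).choose S := by
  classical
  rw [← Nat.card_coe_set_eq, ← Sym.card_sym_eq_choose, ← Nat.card_eq_fintype_card]
  exact Nat.card_congr (Sym.equivNatSumOfFintype ι S).symm

lemma ncard_int_tuples_ge_sum_eq {ι : Type*} [Fintype ι] [Nonempty ι] (L : ι → ℤ) (T : ℤ) :
    ({y : ι → ℤ | (∀ i, L i ≤ y i) ∧ ∑ i, y i = T}.ncard : ℤ) =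
      ch (T - ∑ i, L i + (Fintype.card ι - 1 : ℕ)) (Fintype.card ι - 1) := by
  have hc : 1 ≤ Fintype.card ι := Fintype.card_pos
  by_cases hneg : T - ∑ i, L i < 0
  · have hempty : {y : ι → ℤ | (∀ i, L i ≤ y i) ∧ ∑ i, y i = T} = ∅ := by
      refine Set.eq_empty_of_forall_notMem fun y ⟨hLy, hy⟩ => ?_
      have := Finset.sum_le_sum fun i (_ : i ∈ univ) => hLy i
      omega
    rw [hempty, Set.ncard_empty, ch]
    split_ifs
    · rfl
    · rw [Nat.choose_eq_zero_of_lt (by omega)]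
  obtain ⟨S, hS⟩ : ∃ S : ℕ, T - ∑ i, L i = S :=
    ⟨_, (Int.toNat_of_nonneg (not_lt.1 hneg)).symm⟩
  have himage : {y : ι → ℤ | (∀ i, L i ≤ y i) ∧ ∑ i, y i = T} =
      (fun z i => (z i : ℤ) + L i) '' {z : ι → ℕ | ∑ i, z i = S} := by
    ext y
    constructor
    · rintro ⟨hLy, hy⟩
      refine ⟨fun i => (y i - L i).toNat, ?_, funext fun i => ?_⟩
      · have : ∑ i, ((y i - L i).toNat : ℤ) = S := by
          rw [Finset.sum_congr rfl fun i _ => Int.toNat_of_nonneg (sub_nonneg.2 (hLy i)),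
            Finset.sum_sub_distrib, hy, hS]
        exact_mod_cast this
      · have := hLy i
        simp only
        omega
    · rintro ⟨z, hz, rfl⟩
      refine ⟨fun i => by simp, ?_⟩
      rw [Finset.sum_add_distrib, ← Nat.cast_sum, show ∑ i, z i = S from hz]
      omega
  have hinj : Function.Injective fun (z : ι → ℕ) i => (z i : ℤ) + L i :=
    fun z z' h => funext fun i => by simpa using congrFun h i
  rw [himage, Set.ncard_image_of_injective _ hinj, ncard_nat_tuples_sum_eq, hS, ch,
    if_neg (by omega), ← Nat.cast_add, Int.toNat_natCast, Nat.add_comm S,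
    Nat.choose_symm_add, Nat.sub_add_comm hc]

lemma ncard_setOf_fin_cons {α : Type*} {d : ℕ} (a : α) (P : (Fin d → α) → Prop) :
    {x : Fin (d + 1) → α | x 0 = a ∧ P (Fin.tail x)}.ncard = {y | P y}.ncard := by
  have : {x : Fin (d + 1) → α | x 0 = a ∧ P (Fin.tail x)} =
      Fin.cons (α := fun _ => α) a '' {y | P y} := by
    ext x
    constructor
    · rintro ⟨rfl, hx⟩
      exact ⟨Fin.tail x, hx, Fin.cons_self_tail x⟩
    · rintro ⟨y, hy, rfl⟩
      exact ⟨Fin.cons_zero _ _, by rwa [Fin.tail_cons]⟩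
  rw [this, Set.ncard_image_of_injective _ (Fin.cons_right_injective (α := fun _ => α) a)]

lemma ncard_stratum_sum_eq {d j ℓ : ℕ} (hj : 0 < j) (hjd : j ≤ d + 2) (T : ℤ) :
    ({x : Fin (d + 2) → ℤ | x 0 = -(ℓ : ℤ) ∧
        (∀ i : Fin (d + 2), 1 ≤ (i : ℕ) → (i : ℕ) < j → -(ℓ : ℤ) < x i) ∧
        (∀ i : Fin (d + 2), j ≤ (i : ℕ) → 0 ≤ x i) ∧ ∑ i, x i = T}.ncard : ℤ) =
      ch (T + j * ℓ - j + 1 + d) d := by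
  set L : Fin (d + 1) → ℤ := fun t => if (t.succ : ℕ) < j then 1 - ℓ else 0
  have hL : ∑ t, L t = (j - 1) * (1 - ℓ) := by
    have := Fin.sum_ite_val_lt hjd (1 - (ℓ : ℤ))
    rw [Fin.sum_univ_succ, if_pos (by simpa using hj), nsmul_eq_mul] at this
    linarith
  have hset : {x : Fin (d + 2) → ℤ | x 0 = -(ℓ : ℤ) ∧
        (∀ i : Fin (d + 2), 1 ≤ (i : ℕ) → (i : ℕ) < j → -(ℓ : ℤ) < x i) ∧
        (∀ i : Fin (d + 2), j ≤ (i : ℕ) → 0 ≤ x i) ∧ ∑ i, x i = T} =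
      {x | x 0 = -(ℓ : ℤ) ∧
        (fun y => (∀ t, L t ≤ y t) ∧ ∑ t, y t = T + ℓ) (Fin.tail x)} := by
    ext x
    refine and_congr_right fun hx0 => ?_
    rw [Fin.sum_univ_succ, hx0]
    constructor
    · rintro ⟨hlt, hge, hsum⟩
      refine ⟨fun t => ?_, by simp only [Fin.tail]; linarith⟩
      simp only [L, Fin.tail]
      split_ifs with h
      · have := hlt t.succ (by simp) h
        omega
      · exact hge t.succ (not_lt.1 h)
    · rintro ⟨hL, hsum⟩
      refine ⟨fun i hi1 hij => ?_, fun i hji => ?_, by simp only [Fin.tail] at hsum; linarith⟩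
      · have hi0 : i ≠ 0 := Fin.ne_of_val_ne (by rw [Fin.val_zero]; omega)
        obtain ⟨t, rfl⟩ := Fin.exists_succ_eq.2 hi0
        have := hL t
        simp only [L, Fin.tail, if_pos hij] at this
        omega
      · have hi0 : i ≠ 0 := Fin.ne_of_val_ne (by rw [Fin.val_zero]; omega)
        obtain ⟨t, rfl⟩ := Fin.exists_succ_eq.2 hi0
        have := hL t
        simpa only [L, Fin.tail, if_neg (not_lt.2 hji)] using this
  rw [hset, ncard_setOf_fin_cons (-(ℓ : ℤ))
    fun y : Fin (d + 1) → ℤ => (∀ t, L t ≤ y t) ∧ ∑ t, y t = T + ℓ,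
    ncard_int_tuples_ge_sum_eq, hL, Fintype.card_fin, Nat.add_sub_cancel]
  congr 1
  ring

/-- Counting lattice points of weight `k/m` in the stratum of the Kloosterman
polytope with `x₁ = −ℓ`, `x_i > −ℓ` for `2 ≤ i ≤ j` and `x_i ≥ 0` for `i > j`. -/
theorem stmt19 (n m j ℓ k : ℕ) (hn : 2 ≤ n) (hm : 0 < m) (hj : 1 ≤ j)
    (hjn : j ≤ n) (hℓ1 : 1 ≤ ℓ) :
    (Set.ncard {x : Fin n → ℤ |
        x ⟨0, by omega⟩ = -(ℓ : ℤ) ∧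
        (∀ i : Fin n, 1 ≤ (i : ℕ) → (i : ℕ) < j → -(ℓ : ℤ) < x i) ∧
        (∀ i : Fin n, j ≤ (i : ℕ) → 0 ≤ x i) ∧
        polyWeight (klVerts n j m) x = (k : ℝ) / m} : ℤ) =
      ch ((k : ℤ) - m * ℓ + n - j - 1) (n - 2) := by
  obtain ⟨d, rfl⟩ : ∃ d, n = d + 2 := ⟨n - 2, by omega⟩
  convert ncard_stratum_sum_eq (ℓ := ℓ) hj hjn ((k : ℤ) - (m + j) * ℓ) using 3
  · ext x
    exact and_congr_right fun hx0 => and_congr_right fun hlt => and_congr_right fun hge =>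
      polyWeight_klVerts_eq_div_iff (by omega) hm hj hjn hℓ1 hx0 hlt hge
  · push_cast
    ring
  · omega
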